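/- The stagnation-detection algorithm SD-RLS^r with parameter choice R = n^d for a constant d > 0 has expected runtime n^{Ω(log n)} on the function TwoRates. -/

import Mathlib

open scoped ENNReal Classical

namespace SDRLS

/-- Bit strings of length `n`. -/
abbrev Point (n : ℕ) := Fin n → Bool

/-- Flip the bits of `x` at the positions in `S`. -/
def flipSet {n : ℕ} (x : Point n) (S : Finset (Fin n)) : Point n :=
  fun j => if j ∈ S then !(x j) else x j

/-- Flip exactly `r` positions of `x`, chosen uniformly at random
(junk value: no flip, if `r > n`). -/
noncomputable def flipPMF (n r : ℕ) (x : Point n) : PMF (Point n) :=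
  if h : ((Finset.univ : Finset (Fin n)).powersetCard r).Nonempty then
    (PMF.uniformOfFinset _ h).map (flipSet x)
  else PMF.pure x

/-- Number of one-bits of `x`. -/
def oneBits {n : ℕ} (x : Point n) : ℕ := (Finset.univ.filter fun i => x i = true).card

/-- A state of SD-RLS^r: current solution `x`, current rate `r`, counter `cnt`. -/
structure State (n : ℕ) where
  x : Point n
  r : ℕ
  cnt : ℕ

/-- One iteration of SD-RLS^r with parameter `R`, maximizing `f`: flip `r` bits
chosen uniformly at random; accept only strict improvements (resetting the rate
to `1`); after `C(n,r)·ln R` consecutive unsuccessful iterations at rate `r`,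
increase the rate to `r+1` (rates are used up to `n/2`) and reset the counter. -/
noncomputable def step (n : ℕ) (f : Point n → ℝ) (R : ℝ) (s : State n) :
    PMF (State n) :=
  (flipPMF n s.r s.x).map fun y =>
    if f s.x < f y then ⟨y, 1, 0⟩
    else if (n.choose s.r : ℝ) * Real.log R ≤ (s.cnt + 1 : ℝ) then
      ⟨s.x, min (s.r + 1) (n / 2), 0⟩
    else ⟨s.x, s.r, s.cnt + 1⟩

/-- `x` is a global optimum (maximum) of `f`. -/
def isOpt (n : ℕ) (f : Point n → ℝ) (x : Point n) : Prop := ∀ y, f y ≤ f x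

/-- The SD-RLS^r step, made absorbing in the optimal states. -/
noncomputable def stepAbs (n : ℕ) (f : Point n → ℝ) (R : ℝ) (s : State n) :
    PMF (State n) :=
  if isOpt n f s.x then PMF.pure s else step n f R s

/-- Initial state: uniformly random solution, rate `1`, counter `0`. -/
noncomputable def initPMF (n : ℕ) : PMF (State n) :=
  (PMF.uniformOfFintype (Point n)).map fun x => ⟨x, 1, 0⟩

/-- Distribution of the (absorbed) SD-RLS^r state after `t` iterations. -/
noncomputable def stateAt (n : ℕ) (f : Point n → ℝ) (R : ℝ) : ℕ → PMF (State n)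
  | 0 => initPMF n
  | t + 1 => (stateAt n f R t).bind (stepAbs n f R)

/-- Expected runtime (number of `f`-evaluations until an optimum of `f` is first
evaluated) of SD-RLS^r on `f`. -/
noncomputable def expectedRuntime (n : ℕ) (f : Point n → ℝ) (R : ℝ) : ℝ≥0∞ :=
  1 + ∑' t : ℕ, (stateAt n f R t).toOuterMeasure {s | ¬ isOpt n f s.x}

/-- The TwoRates function (with parameters `s` and `g`): `x ↦ |x|₁` if `|x|₁ < s`,
or `|x|₁ ≥ (3/4)n`, or `|x|₁ = s + i·g` for an admissible `i`
(the admissible `i ∈ {0,2,3,5,6,8,9,…}` are exactly those with `i mod 3 ≠ 1`);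
otherwise `x ↦ −1`. -/
noncomputable def TwoRates (n s g : ℕ) (x : Point n) : ℝ :=
  if oneBits x < s ∨ 3 * n ≤ 4 * oneBits x ∨
      ∃ i : ℕ, i % 3 ≠ 1 ∧ oneBits x = s + i * g then
    (oneBits x : ℝ)
  else -1

/-!
On the plateau `|x|₁ = s` the nearest improvement is `2g` bits away, since the levels strictly
between `s` and `s + 2g` are worth `-1`. So once there, SD-RLS has to exhaust every rate
`1, …, 2g - 1`, which takes at least `C(n, 2g - 1) · ln R` iterations. A uniform start has at
most `n/2 < s` one-bits with probability at least `1/2`. Below the plateau a rate-`1` iteration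
succeeds with probability at least `1/4`, so the algorithm climbs to the plateau one bit at a
time, never leaving rate `1`, with probability at least `1/2`. Both facts are combined in a
potential bounding the expected number of future non-optimal states from below; it satisfies a
one-step drift inequality. Finally, for `n = 4^j` we have
`C(n, 4j - 1) ≥ (2^j)^(4j-1) ≥ 4 · n^(ln n / 4)`.
-/

end SDRLS

namespace PMF

variable {α β : Type*}

lemma tsum_bind_mul (p : PMF α) (f : α → PMF β) (h : β → ℝ≥0∞) :
    ∑' b, p.bind f b * h b = ∑' a, p a * ∑' b, f a b * h b := by
  simp only [bind_apply, ← ENNReal.tsum_mul_right, ← ENNReal.tsum_mul_left, mul_assoc]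
  exact ENNReal.tsum_comm

lemma tsum_map_mul (p : PMF α) (f : α → β) (h : β → ℝ≥0∞) :
    ∑' b, p.map f b * h b = ∑' a, p a * h (f a) := by
  rw [← bind_pure_comp, tsum_bind_mul]
  refine tsum_congr fun a => ?_
  simp [pure_apply]

lemma toOuterMeasure_mul_le_tsum_mul (p : PMF α) {s : Set α} {h : α → ℝ≥0∞} {c : ℝ≥0∞}
    (hc : ∀ a ∈ s, c ≤ h a) : p.toOuterMeasure s * c ≤ ∑' a, p a * h a := by
  rw [toOuterMeasure_apply, ← ENNReal.tsum_mul_right]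
  refine ENNReal.tsum_le_tsum fun a => ?_
  by_cases ha : a ∈ s
  · simpa [ha] using mul_le_mul_right (hc a ha) (p a)
  · simp [ha]

lemma le_tsum_mul_of_forall_mem_support (p : PMF α) {h : α → ℝ≥0∞} {c : ℝ≥0∞}
    (hc : ∀ a ∈ p.support, c ≤ h a) : c ≤ ∑' a, p a * h a := by
  simpa [(p.toOuterMeasure_apply_eq_one_iff _).2 subset_rfl] using
    p.toOuterMeasure_mul_le_tsum_mul hc

/-- If `w m a` never exceeds the indicator of `B` plus the expectation of `w (m - 1)` one step
later, then `w M` bounds from below the expected number of visits to `B` among the first `M`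
states of the chain with transition kernel `κ`. -/
theorem tsum_mul_le_sum_toOuterMeasure_iterate_bind (κ : α → PMF α) (B : Set α)
    (w : ℕ → α → ℝ≥0∞) (hw₀ : ∀ a, w 0 a = 0)
    (hw : ∀ m a, w (m + 1) a ≤ B.indicator 1 a + ∑' b, κ a b * w m b) (M : ℕ) (μ : PMF α) :
    ∑' a, μ a * w M a ≤ ∑ t ∈ Finset.range M, ((·.bind κ)^[t] μ).toOuterMeasure B := by
  induction M generalizing μ with
  | zero => simp [hw₀]
  | succ M ih =>
    calc ∑' a, μ a * w (M + 1) a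
        ≤ ∑' a, μ a * (B.indicator 1 a + ∑' b, κ a b * w M b) :=
          ENNReal.tsum_le_tsum fun a => mul_le_mul_right (hw M a) _
      _ = μ.toOuterMeasure B + ∑' b, μ.bind κ b * w M b := by
          simp only [mul_add, ENNReal.tsum_add, tsum_bind_mul, toOuterMeasure_apply]
          congr 1
          refine tsum_congr fun a => ?_
          by_cases ha : a ∈ B <;> simp [ha]
      _ ≤ μ.toOuterMeasure B +
            ∑ t ∈ Finset.range M, ((·.bind κ)^[t] (μ.bind κ)).toOuterMeasure B :=
          add_le_add_right (ih _) _
      _ = ∑ t ∈ Finset.range (M + 1), ((·.bind κ)^[t] μ).toOuterMeasure B := by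
          rw [Finset.sum_range_succ', add_comm]
          rfl

end PMF

namespace SDRLS

lemma stateAt_eq_iterate (n : ℕ) (f : Point n → ℝ) (R : ℝ) (t : ℕ) :
    stateAt n f R t = (·.bind (stepAbs n f R))^[t] (initPMF n) := by
  induction t with
  | zero => rfl
  | succ t ih => rw [stateAt, Function.iterate_succ_apply', ih]

theorem tsum_initPMF_mul_le_expectedRuntime {n : ℕ} {f : Point n → ℝ} {R : ℝ}
    (w : ℕ → State n → ℝ≥0∞) (hw₀ : ∀ σ, w 0 σ = 0)
    (hw : ∀ m σ, w (m + 1) σ ≤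
      {σ : State n | ¬ isOpt n f σ.x}.indicator 1 σ + ∑' σ', stepAbs n f R σ σ' * w m σ')
    (M : ℕ) : ∑' σ, initPMF n σ * w M σ ≤ expectedRuntime n f R := by
  refine (PMF.tsum_mul_le_sum_toOuterMeasure_iterate_bind _ _ w hw₀ hw M _).trans ?_
  simp only [← stateAt_eq_iterate]
  exact (ENNReal.sum_le_tsum _).trans le_add_self

section OneBits

variable {n : ℕ}

lemma oneBits_le (x : Point n) : oneBits x ≤ n := by
  simpa [oneBits] using Finset.card_filter_le Finset.univ fun i => x i = true

lemma oneBits_flipSet_le (x : Point n) (S : Finset (Fin n)) :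
    oneBits (flipSet x S) ≤ oneBits x + S.card := by
  refine (Finset.card_le_card fun i hi => ?_).trans (Finset.card_union_le _ S)
  by_cases hiS : i ∈ S
  · exact Finset.mem_union_right _ hiS
  · simp_all [flipSet]

lemma oneBits_le_of_mem_support_flipPMF {r : ℕ} {x y : Point n}
    (hy : y ∈ (flipPMF n r x).support) : oneBits y ≤ oneBits x + r := by
  unfold flipPMF at hy
  split at hy
  · obtain ⟨S, hS, rfl⟩ := by simpa using hy
    simpa [hS] using oneBits_flipSet_le x S
  · simp_all

lemma oneBits_flipSet_singleton_of_false {x : Point n} {i : Fin n} (h : x i = false) :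
    oneBits (flipSet x {i}) = oneBits x + 1 := by
  have : Finset.univ.filter (fun j => flipSet x {i} j = true)
      = insert i (Finset.univ.filter fun j => x j = true) := by
    ext j
    by_cases hj : j = i <;> simp [flipSet, hj, h]
  rw [oneBits, this, Finset.card_insert_of_notMem (by simp [h]), oneBits]

lemma oneBits_flipSet_singleton_of_true {x : Point n} {i : Fin n} (h : x i = true) :
    oneBits (flipSet x {i}) + 1 = oneBits x := by
  have : Finset.univ.filter (fun j => x j = true)
      = insert i (Finset.univ.filter fun j => flipSet x {i} j = true) := by
    ext j
    by_cases hj : j = i <;> simp [flipSet, hj, h]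
  rw [oneBits, oneBits, this, Finset.card_insert_of_notMem (by simp [flipSet, h])]

lemma oneBits_not_add_oneBits (x : Point n) : oneBits (fun i => !x i) + oneBits x = n := by
  simpa [oneBits, add_comm] using Finset.card_filter_add_card_filter_not
    (s := Finset.univ) (fun i : Fin n => x i = true)

lemma sum_ite_eq_oneBits_mul_add (x : Point n) (a b : ℝ) :
    ∑ i, (if x i = true then a else b) = oneBits x * a + (n - oneBits x) * b := by
  have hcard : (Finset.univ.filter fun i => ¬ x i = true).card = n - oneBits x := by
    have := Finset.card_filter_add_card_filter_not (s := Finset.univ) (fun i : Fin n => x i = true)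
    simp only [Finset.card_univ, Fintype.card_fin] at this
    rw [oneBits]
    omega
  rw [Finset.sum_ite, Finset.sum_const, Finset.sum_const, nsmul_eq_mul, nsmul_eq_mul, hcard,
    Nat.cast_sub (oneBits_le x)]
  rfl

end OneBits

section TwoRates

variable {n s g : ℕ} {x : Point n}

lemma TwoRates_le_oneBits : TwoRates n s g x ≤ oneBits x := by
  unfold TwoRates
  split_ifs <;> linarith [(oneBits x).cast_nonneg (α := ℝ)]

lemma TwoRates_of_le (h : oneBits x ≤ s) : TwoRates n s g x = oneBits x := by
  rcases h.lt_or_eq with h | h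
  · simp [TwoRates, h]
  · exact if_pos (Or.inr (Or.inr ⟨0, by norm_num, by simp [h]⟩))

/-- Between `s` and `s + 2g` the only level of the form `s + i g` has the inadmissible `i = 1`. -/
lemma TwoRates_le_of_oneBits_lt (hgap : 4 * (s + 2 * g) ≤ 3 * n) (h : oneBits x < s + 2 * g) :
    TwoRates n s g x ≤ s := by
  rcases le_or_gt (oneBits x) s with hle | hlt
  · exact TwoRates_le_oneBits.trans (by exact_mod_cast hle)
  suffices TwoRates n s g x = -1 by rw [this]; linarith [s.cast_nonneg (α := ℝ)]
  refine if_neg ?_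
  push Not
  refine ⟨hlt.le, by omega, fun i hi heq => hi ?_⟩
  have : i < 2 := by
    by_contra! h2
    nlinarith
  interval_cases i <;> omega

lemma TwoRates_const_true : TwoRates n s g (fun _ => true) = n := by
  have hones : oneBits (fun _ : Fin n => true) = n := by simp [oneBits]
  rw [TwoRates, if_pos (Or.inr (Or.inl (by omega))), hones]

lemma not_isOpt_TwoRates (hsn : s < n) (h : TwoRates n s g x ≤ s) :
    ¬ isOpt n (TwoRates n s g) x := fun hopt => by
  have := (hopt fun _ => true).trans h
  rw [TwoRates_const_true] at this
  exact absurd this (by exact_mod_cast hsn.not_ge)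

end TwoRates

section Durations

variable {n g : ℕ} {R : ℝ}

/-- The number of unsuccessful iterations that `step` spends at rate `r`. -/
noncomputable def rateDuration (n : ℕ) (R : ℝ) (r : ℕ) : ℕ := ⌈(n.choose r : ℝ) * Real.log R⌉₊

lemma rateDuration_le_iff {r c : ℕ} :
    rateDuration n R r ≤ c + 1 ↔ (n.choose r : ℝ) * Real.log R ≤ (c + 1 : ℝ) := by
  rw [rateDuration, Nat.ceil_le]
  push_cast
  rfl

lemma choose_le_rateDuration (hR : 1 ≤ Real.log R) (r : ℕ) :
    n.choose r ≤ rateDuration n R r := by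
  have : (n.choose r : ℝ) ≤ rateDuration n R r :=
    (le_mul_of_one_le_right (Nat.cast_nonneg _) hR).trans (Nat.le_ceil _)
  exact_mod_cast this

/-- The number of iterations that a solution on the plateau at rate `r`, with counter `c`, has
to wait before the rate reaches `2g`. -/
noncomputable def plateauTime (n : ℕ) (R : ℝ) (g r c : ℕ) : ℕ :=
  (∑ r' ∈ Finset.Ico r (2 * g), rateDuration n R r') - c

lemma plateauTime_eq_zero {r : ℕ} (hr : 2 * g ≤ r) (c : ℕ) : plateauTime n R g r c = 0 := by
  simp [plateauTime, hr]

lemma plateauTime_succ (r c : ℕ) :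
    plateauTime n R g r (c + 1) = plateauTime n R g r c - 1 := by
  unfold plateauTime
  omega

lemma plateauTime_sub_one_le {r c : ℕ} (hr : r < 2 * g) (h : rateDuration n R r ≤ c + 1) :
    plateauTime n R g r c - 1 ≤ plateauTime n R g (r + 1) 0 := by
  unfold plateauTime
  rw [Finset.sum_eq_sum_Ico_succ_bot hr]
  omega

lemma choose_le_plateauTime (hg : 0 < g) (hR : 1 ≤ Real.log R) :
    n.choose (2 * g - 1) ≤ plateauTime n R g 1 0 :=
  (choose_le_rateDuration hR _).trans <|
    Finset.single_le_sum (f := rateDuration n R) (fun _ _ => Nat.zero_le _)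
      (Finset.mem_Ico.mpr ⟨by omega, by omega⟩)

/-- A lower bound on the probability that rate `1`, with counter `c`, yields an improvement
before it expires, when each iteration succeeds with probability at least `1/4`. -/
noncomputable def improveProb (n : ℕ) (R : ℝ) (c : ℕ) : ℝ :=
  1 - (3 / 4) ^ (rateDuration n R 1 - c)

lemma improveProb_nonneg (c : ℕ) : 0 ≤ improveProb n R c :=
  sub_nonneg.mpr (pow_le_one₀ (by norm_num) (by norm_num))

lemma improveProb_le_one (c : ℕ) : improveProb n R c ≤ 1 :=
  sub_le_self _ (by positivity)

lemma improveProb_eq_zero {c : ℕ} (h : rateDuration n R 1 ≤ c) : improveProb n R c = 0 := by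
  simp [improveProb, Nat.sub_eq_zero_of_le h]

lemma improveProb_le_succ (c : ℕ) :
    improveProb n R c ≤ 1 / 4 + 3 / 4 * improveProb n R (c + 1) := by
  rcases le_or_gt (rateDuration n R 1) c with h | h
  · rw [improveProb_eq_zero h, improveProb_eq_zero (by omega)]
    norm_num
  · obtain ⟨e, he, he'⟩ :
        ∃ e, rateDuration n R 1 - c = e + 1 ∧ rateDuration n R 1 - (c + 1) = e :=
      ⟨_, by omega, rfl⟩
    simp only [improveProb, he, he', pow_succ]
    linarith

lemma one_half_le_improveProb_pow {s : ℕ} (hR : 1 ≤ Real.log R)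
    (hs : (s : ℝ) * (3 / 4) ^ n ≤ 1 / 2) : 1 / 2 ≤ improveProb n R 0 ^ s := by
  set t : ℝ := (3 / 4) ^ rateDuration n R 1
  have ht : t ≤ (3 / 4) ^ n :=
    pow_le_pow_of_le_one (by norm_num) (by norm_num) (by simpa using choose_le_rateDuration hR 1)
  have ht₁ : t ≤ 1 := pow_le_one₀ (by norm_num) (by norm_num)
  have hbern : 1 - s * t ≤ (1 - t) ^ s := by
    simpa [sub_eq_add_neg] using one_add_mul_le_pow (a := -t) (by linarith) s
  simp only [improveProb, Nat.sub_zero]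
  nlinarith [mul_le_mul_of_nonneg_left ht s.cast_nonneg]

end Durations

lemma tsum_flipPMF_one_mul {n : ℕ} (hn : 0 < n) (x : Point n) (h : Point n → ℝ≥0∞) :
    ∑' y, flipPMF n 1 x y * h y = (n : ℝ≥0∞)⁻¹ * ∑ i, h (flipSet x {i}) := by
  have hne : ((Finset.univ : Finset (Fin n)).powersetCard 1).Nonempty :=
    Finset.powersetCard_nonempty.2 (by simpa using Nat.one_le_of_lt hn)
  rw [flipPMF, dif_pos hne, PMF.tsum_map_mul,
    tsum_eq_sum (s := Finset.univ.powersetCard 1) fun S hS => by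
      simp [PMF.uniformOfFinset_apply, hS],
    Finset.sum_congr rfl fun S hS => by rw [PMF.uniformOfFinset_apply_of_mem hne hS],
    ← Finset.mul_sum, Finset.card_powersetCard, Finset.powersetCard_one, Finset.sum_map]
  simp

noncomputable def nextState (n : ℕ) (f : Point n → ℝ) (R : ℝ) (σ : State n) (y : Point n) :
    State n :=
  if f σ.x < f y then ⟨y, 1, 0⟩
  else if (n.choose σ.r : ℝ) * Real.log R ≤ (σ.cnt + 1 : ℝ) then
    ⟨σ.x, min (σ.r + 1) (n / 2), 0⟩
  else ⟨σ.x, σ.r, σ.cnt + 1⟩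

lemma step_eq_map (n : ℕ) (f : Point n → ℝ) (R : ℝ) (σ : State n) :
    step n f R σ = (flipPMF n σ.r σ.x).map (nextState n f R σ) :=
  rfl

section Potential

variable {n g s : ℕ} {R : ℝ}

/-- A lower bound on the expected number of non-optimal states among the next `m`: on the
plateau `|x|₁ = s` the time left there; below it at rate `1`, the plateau time from a fresh
arrival, weighted by a lower bound on the probability of climbing to the plateau at rate `1`. -/
noncomputable def potential (n g s : ℕ) (R : ℝ) (m : ℕ) (σ : State n) : ℝ≥0∞ :=
  if oneBits σ.x = s then (min m (plateauTime n R g σ.r σ.cnt) : ℕ)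
  else if oneBits σ.x < s ∧ σ.r = 1 then
    ENNReal.ofReal (improveProb n R σ.cnt * improveProb n R 0 ^ (s - (oneBits σ.x + 1))) *
      (min m (plateauTime n R g 1 0) : ℕ)
  else 0

lemma potential_zero (σ : State n) : potential n g s R 0 σ = 0 := by
  unfold potential
  split_ifs <;> simp

lemma potential_succ_le_of_eq (hcap : 2 * g ≤ n / 2) (hgap : 4 * (s + 2 * g) ≤ 3 * n)
    {x : Point n} (hx : oneBits x = s) (r c m : ℕ) :
    potential n g s R (m + 1) ⟨x, r, c⟩ ≤
      1 + ∑' σ', step n (TwoRates n s g) R ⟨x, r, c⟩ σ' * potential n g s R m σ' := by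
  set P := plateauTime n R g r c
  rcases le_or_gt (2 * g) r with hr | hr
  · simp [potential, hx, plateauTime_eq_zero hr]
  have hnext : ∀ σ' ∈ (step n (TwoRates n s g) R ⟨x, r, c⟩).support,
      ((min m (P - 1) : ℕ) : ℝ≥0∞) ≤ potential n g s R m σ' := by
    intro σ' hσ'
    rw [step_eq_map, PMF.support_map] at hσ'
    obtain ⟨y, hy, rfl⟩ := hσ'
    dsimp only at hy
    have hrej : ¬ TwoRates n s g x < TwoRates n s g y := by
      rw [not_lt, TwoRates_of_le hx.le, hx]
      exact TwoRates_le_of_oneBits_lt hgap (by have := oneBits_le_of_mem_support_flipPMF hy; omega)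
    simp only [nextState, if_neg hrej]
    split_ifs with hb
    · rw [← rateDuration_le_iff] at hb
      rw [min_eq_left (by omega : r + 1 ≤ n / 2)]
      simp only [potential, hx, if_true]
      exact_mod_cast min_le_min_left _ (plateauTime_sub_one_le hr hb)
    · simp [potential, hx, plateauTime_succ, P]
  calc potential n g s R (m + 1) ⟨x, r, c⟩ = ((min (m + 1) P : ℕ) : ℝ≥0∞) := by
        simp [potential, hx, P]
    _ ≤ ((1 + min m (P - 1) : ℕ) : ℝ≥0∞) := by gcongr; omega
    _ ≤ _ := by
        push_cast
        gcongr
        exact PMF.le_tsum_mul_of_forall_mem_support _ hnext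

lemma ofReal_mul_le_potential_nextState {x : Point n} (hx : oneBits x < s) (c m : ℕ)
    (i : Fin n) :
    ENNReal.ofReal (improveProb n R 0 ^ (s - (oneBits x + 1)) *
        if x i = true then improveProb n R (c + 1) else 1) * (min m (plateauTime n R g 1 0) : ℕ) ≤
      potential n g s R m (nextState n (TwoRates n s g) R ⟨x, 1, c⟩ (flipSet x {i})) := by
  cases hxi : x i
  · have hk := oneBits_flipSet_singleton_of_false hxi
    have hacc : TwoRates n s g x < TwoRates n s g (flipSet x {i}) := by
      rw [TwoRates_of_le hx.le, TwoRates_of_le (by omega), hk]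
      push_cast
      linarith
    simp only [nextState, if_pos hacc, Bool.false_eq_true, if_false, mul_one]
    rcases (by omega : oneBits x + 1 < s ∨ oneBits x + 1 = s) with hlt | heq
    · rw [show s - (oneBits x + 1) = s - (oneBits x + 1 + 1) + 1 by omega, pow_succ']
      simp [potential, hk, hlt, hlt.ne]
    · simp [potential, hk, heq]
  · have hk := oneBits_flipSet_singleton_of_true hxi
    have hrej : ¬ TwoRates n s g x < TwoRates n s g (flipSet x {i}) := by
      rw [not_lt, TwoRates_of_le hx.le, TwoRates_of_le (by omega)]
      exact_mod_cast (by omega : oneBits (flipSet x {i}) ≤ oneBits x)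
    simp only [nextState, if_neg hrej, if_true]
    split_ifs with hb
    · simp [improveProb_eq_zero (rateDuration_le_iff.2 hb)]
    · simp [potential, hx, hx.ne, mul_comm]

/-- The drift inequality behind `potential` below the plateau: a rate-`1` iteration from `x`
succeeds with probability `(n - |x|₁)/n ≥ 1/4`. -/
lemma mul_improveProb_le_sum {x : Point n} (hx : 4 * oneBits x ≤ 3 * n) (c e : ℕ) :
    (n : ℝ) * (improveProb n R c * improveProb n R 0 ^ e) ≤
      ∑ i, improveProb n R 0 ^ e * if x i = true then improveProb n R (c + 1) else 1 := by
  have hx' : 4 * (oneBits x : ℝ) ≤ 3 * n := by exact_mod_cast hx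
  have hdrift : (n : ℝ) * improveProb n R c ≤
      oneBits x * improveProb n R (c + 1) + (n - oneBits x) * 1 := by
    nlinarith [improveProb_le_succ (n := n) (R := R) c,
      improveProb_le_one (n := n) (R := R) (c + 1)]
  rw [← Finset.mul_sum, sum_ite_eq_oneBits_mul_add]
  nlinarith [mul_le_mul_of_nonneg_left hdrift
    (pow_nonneg (improveProb_nonneg (n := n) (R := R) 0) e)]

lemma potential_succ_le_of_lt (hgap : 4 * (s + 2 * g) ≤ 3 * n) {x : Point n}
    (hx : oneBits x < s) (c m : ℕ) :
    potential n g s R (m + 1) ⟨x, 1, c⟩ ≤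
      1 + ∑' σ', step n (TwoRates n s g) R ⟨x, 1, c⟩ σ' * potential n g s R m σ' := by
  set X : ℝ≥0∞ := ((min m (plateauTime n R g 1 0) : ℕ) : ℝ≥0∞)
  set q : ℝ := improveProb n R 0 ^ (s - (oneBits x + 1))
  set b : Fin n → ℝ := fun i => q * if x i = true then improveProb n R (c + 1) else 1
  have hn : 0 < n := by omega
  have hq : 0 ≤ q := pow_nonneg (improveProb_nonneg 0) _
  have hb : ∀ i ∈ Finset.univ, 0 ≤ b i := fun i _ =>
    mul_nonneg hq (by split_ifs <;> simp [improveProb_nonneg])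
  have hsum : (n : ℝ) * (improveProb n R c * q) ≤ ∑ i, b i :=
    mul_improveProb_le_sum (by omega) c _
  have hcoef : ENNReal.ofReal (improveProb n R c * q) ≤
      (n : ℝ≥0∞)⁻¹ * ENNReal.ofReal (∑ i, b i) := by
    rw [← ENNReal.div_eq_inv_mul, ← ENNReal.ofReal_natCast, ← ENNReal.ofReal_div_of_pos
      (by exact_mod_cast hn)]
    exact ENNReal.ofReal_le_ofReal ((le_div_iff₀' (by exact_mod_cast hn)).2 hsum)
  rw [step_eq_map, PMF.tsum_map_mul, tsum_flipPMF_one_mul hn]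
  calc potential n g s R (m + 1) ⟨x, 1, c⟩
      = ENNReal.ofReal (improveProb n R c * q) * (min (m + 1) (plateauTime n R g 1 0) : ℕ) := by
        simp [potential, hx, hx.ne, q]
    _ ≤ ENNReal.ofReal (improveProb n R c * q) * (X + 1) := by
        gcongr
        simp only [X]
        exact_mod_cast (by omega : min (m + 1) (plateauTime n R g 1 0) ≤
          min m (plateauTime n R g 1 0) + 1)
    _ ≤ 1 + ENNReal.ofReal (improveProb n R c * q) * X := by
        rw [mul_add, mul_one, add_comm]
        gcongr
        exact ENNReal.ofReal_le_one.2 (mul_le_one₀ (improveProb_le_one c) hq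
          (pow_le_one₀ (improveProb_nonneg 0) (improveProb_le_one 0)))
    _ ≤ 1 + (n : ℝ≥0∞)⁻¹ * ENNReal.ofReal (∑ i, b i) * X := by gcongr
    _ = 1 + (n : ℝ≥0∞)⁻¹ * ∑ i, ENNReal.ofReal (b i) * X := by
        rw [ENNReal.ofReal_sum_of_nonneg hb, mul_assoc, Finset.sum_mul]
    _ ≤ _ := by
        gcongr with i
        exact ofReal_mul_le_potential_nextState hx c m i

lemma potential_succ_le (hg : 0 < g) (hcap : 2 * g ≤ n / 2) (hgap : 4 * (s + 2 * g) ≤ 3 * n)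
    (m : ℕ) (σ : State n) :
    potential n g s R (m + 1) σ ≤ {σ : State n | ¬ isOpt n (TwoRates n s g) σ.x}.indicator 1 σ +
      ∑' σ', stepAbs n (TwoRates n s g) R σ σ' * potential n g s R m σ' := by
  obtain ⟨x, r, c⟩ := σ
  by_cases hx : oneBits x = s ∨ (oneBits x < s ∧ r = 1)
  · have hopt : ¬ isOpt n (TwoRates n s g) x :=
      not_isOpt_TwoRates (by omega) (by rw [TwoRates_of_le (by omega)]; exact_mod_cast (by omega))
    rw [Set.indicator_of_mem hopt, stepAbs, if_neg hopt, Pi.one_apply]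
    rcases hx with hx | ⟨hx, rfl⟩
    · exact potential_succ_le_of_eq hcap hgap hx r c m
    · exact potential_succ_le_of_lt hgap hx c m
  · have h0 : potential n g s R (m + 1) ⟨x, r, c⟩ = 0 := by
      simp only [potential]
      rw [if_neg (not_or.mp hx).1, if_neg (not_or.mp hx).2]
    simp [h0]

end Potential

lemma two_pow_le_two_mul_card_oneBits_le {n : ℕ} :
    2 ^ n ≤ 2 * Fintype.card {x : Point n // 2 * oneBits x ≤ n} := by
  have hcompl : Fintype.card {x : Point n // ¬ 2 * oneBits x ≤ n} ≤
      Fintype.card {x : Point n // 2 * oneBits x ≤ n} :=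
    Fintype.card_le_of_injective
      (fun x => ⟨fun i => !x.1 i, by have := oneBits_not_add_oneBits x.1; have := x.2; omega⟩)
      (fun x y h => Subtype.ext <| funext fun i => by
        simpa using congrFun (congrArg Subtype.val h) i)
  rw [Fintype.card_subtype_compl] at hcompl
  simp only [Fintype.card_pi, Fintype.card_bool, Finset.prod_const, Finset.card_univ,
    Fintype.card_fin] at hcompl
  omega

lemma half_le_uniform_oneBits_le {n : ℕ} :
    2⁻¹ ≤ (PMF.uniformOfFintype (Point n)).toOuterMeasure {x | 2 * oneBits x ≤ n} := by
  rw [PMF.toOuterMeasure_uniformOfFintype_apply, ENNReal.le_div_iff_mul_le (by simp) (by simp),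
    ENNReal.inv_mul_le_iff (by simp) (by simp)]
  simp only [Fintype.card_pi, Fintype.card_bool, Finset.prod_const, Finset.card_univ,
    Fintype.card_fin]
  exact_mod_cast two_pow_le_two_mul_card_oneBits_le

lemma plateauTime_div_four_le_tsum_initPMF_mul_potential {n g s : ℕ} {R : ℝ} (hs : n < 2 * s)
    (hR : 1 ≤ Real.log R) (htail : (s : ℝ) * (3 / 4) ^ n ≤ 1 / 2) :
    (plateauTime n R g 1 0 : ℝ≥0∞) / 4 ≤
      ∑' σ, initPMF n σ * potential n g s R (plateauTime n R g 1 0) σ := by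
  set T := plateauTime n R g 1 0
  have hhalf : ∀ x ∈ {x : Point n | 2 * oneBits x ≤ n},
      (T : ℝ≥0∞) / 2 ≤ potential n g s R T ⟨x, 1, 0⟩ := by
    intro x hx
    have hk : oneBits x < s := by
      have : 2 * oneBits x ≤ n := hx
      omega
    have hprob : 1 / 2 ≤ improveProb n R 0 * improveProb n R 0 ^ (s - (oneBits x + 1)) := by
      rw [← pow_succ']
      exact (one_half_le_improveProb_pow hR htail).trans
        (pow_le_pow_of_le_one (improveProb_nonneg 0) (improveProb_le_one 0) (by omega))
    simp only [potential, hk.ne, hk, and_self, if_true, if_false]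
    calc (T : ℝ≥0∞) / 2 = ENNReal.ofReal (1 / 2) * T := by
          rw [ENNReal.div_eq_inv_mul, one_div, ENNReal.ofReal_inv_of_pos two_pos,
            ENNReal.ofReal_ofNat]
      _ ≤ _ := by
          gcongr
          exact (min_self _).ge
  calc (T : ℝ≥0∞) / 4 = 2⁻¹ * (T / 2) := by
        rw [ENNReal.div_eq_inv_mul, ENNReal.div_eq_inv_mul, ← mul_assoc,
          ← ENNReal.mul_inv (by simp) (by simp)]
        norm_num
    _ ≤ (PMF.uniformOfFintype (Point n)).toOuterMeasure {x | 2 * oneBits x ≤ n} * (T / 2) := by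
        gcongr
        exact half_le_uniform_oneBits_le
    _ ≤ ∑' x, PMF.uniformOfFintype (Point n) x * potential n g s R T ⟨x, 1, 0⟩ :=
        PMF.toOuterMeasure_mul_le_tsum_mul _ hhalf
    _ = _ := (PMF.tsum_map_mul _ _ _).symm

theorem plateauTime_div_four_le_expectedRuntime {n g s : ℕ} {R : ℝ} (hg : 0 < g)
    (hcap : 2 * g ≤ n / 2) (hgap : 4 * (s + 2 * g) ≤ 3 * n) (hs : n < 2 * s)
    (hR : 1 ≤ Real.log R) (htail : (s : ℝ) * (3 / 4) ^ n ≤ 1 / 2) :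
    (plateauTime n R g 1 0 : ℝ≥0∞) / 4 ≤ expectedRuntime n (TwoRates n s g) R :=
  (plateauTime_div_four_le_tsum_initPMF_mul_potential hs hR htail).trans <|
    tsum_initPMF_mul_le_expectedRuntime _ potential_zero (potential_succ_le hg hcap hgap) _

lemma nat_mul_three_quarters_pow_le {n : ℕ} (hn : 98 ≤ n) : (n : ℝ) * (3 / 4) ^ n ≤ 1 / 2 := by
  have hn₀ : (0 : ℝ) < n := by positivity
  have hn' : (98 : ℝ) ≤ n := by exact_mod_cast hn
  have hbern : (n : ℝ) / 7 ≤ (8 / 7) ^ n := by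
    have := one_add_mul_le_pow (a := (1 / 7 : ℝ)) (by norm_num) n
    norm_num at this ⊢
    linarith
  have h78 : (7 / 8 : ℝ) ^ n ≤ 7 / n := by
    rw [le_div_iff₀ hn₀]
    calc (7 / 8 : ℝ) ^ n * n = 7 * ((7 / 8) ^ n * (n / 7)) := by ring
      _ ≤ 7 * ((7 / 8) ^ n * (8 / 7) ^ n) := by gcongr
      _ = 7 := by rw [← mul_pow]; norm_num
  have h34 : (3 / 4 : ℝ) ^ n ≤ ((7 / 8) ^ n) ^ 2 := by
    rw [← pow_mul, mul_comm, pow_mul]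
    exact pow_le_pow_left₀ (by norm_num) (by norm_num) n
  calc (n : ℝ) * (3 / 4) ^ n ≤ n * (7 / n) ^ 2 := by gcongr; exact h34.trans (by gcongr)
    _ = 49 / n := by field_simp; ring
    _ ≤ 1 / 2 := by rw [div_le_iff₀ hn₀]; linarith

lemma exists_eq_two_pow_of_mul_self_eq {a g : ℕ} (h : a * a = 2 ^ g) :
    ∃ j, a = 2 ^ j ∧ g = 2 * j := by
  obtain ⟨j, -, rfl⟩ := (Nat.dvd_prime_pow Nat.prime_two).1 (Dvd.intro _ h)
  exact ⟨j, rfl, Nat.pow_right_injective le_rfl (h.symm.trans (by ring))⟩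

lemma eight_mul_le_two_pow {j : ℕ} (hj : 6 ≤ j) : 8 * j ≤ 2 ^ j := by
  obtain ⟨i, rfl⟩ := Nat.exists_eq_add_of_le hj
  have := Nat.lt_two_pow_self (n := i)
  rw [pow_add]
  omega

lemma pow_le_choose_mul_self {a k : ℕ} (h : 2 * k ≤ a) : a ^ k ≤ (a * a).choose k := by
  have hak : a * k ≤ a * a + 1 - k := by
    have : 2 * (a * k) ≤ a * a := by nlinarith
    rcases Nat.eq_zero_or_pos k with rfl | hk
    · simp
    · have : k ≤ a * k := Nat.le_mul_of_pos_left k (by omega)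
      omega
  refine Nat.le_of_mul_le_mul_right ?_ k.factorial_pos
  calc a ^ k * k.factorial ≤ a ^ k * k ^ k := Nat.mul_le_mul_left _ k.factorial_le_pow
    _ = (a * k) ^ k := (mul_pow a k k).symm
    _ ≤ (a * a + 1 - k) ^ k := Nat.pow_le_pow_left hak k
    _ ≤ (a * a).descFactorial k := Nat.pow_sub_le_descFactorial _ _
    _ = (a * a).choose k * k.factorial := by
        rw [Nat.descFactorial_eq_factorial_mul_choose, mul_comm]

lemma rpow_log_div_four_le {n j : ℕ} (hn : n = 2 ^ (2 * j)) :
    (n : ℝ) ^ (1 / 4 * Real.log n) ≤ 2 ^ (j * j) := by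
  have hlog : Real.log n = 2 * j * Real.log 2 := by simp [hn, Real.log_pow]
  rw [Real.rpow_def_of_pos (by simp [hn]), hlog,
    ← Real.exp_log (by positivity : (0 : ℝ) < 2 ^ (j * j)), Real.log_pow, Real.exp_le_exp]
  push_cast
  have h₀ := Real.log_pos one_lt_two
  have h₁ : Real.log 2 < 1 := Real.log_two_lt_d9.trans (by norm_num)
  nlinarith [mul_nonneg (mul_nonneg (mul_self_nonneg (j : ℝ)) h₀.le) (sub_nonneg.2 h₁.le)]

lemma one_le_log_rpow {d x : ℝ} (hd : 0 < d) (hx : Real.exp (1 / d) ≤ x) :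
    1 ≤ Real.log (x ^ d) := by
  have hx₀ : 0 < x := (Real.exp_pos _).trans_le hx
  rw [Real.log_rpow hx₀, mul_comm, ← div_le_iff₀ hd]
  exact (Real.le_log_iff_exp_le hx₀).2 hx

lemma four_mul_two_pow_mul_self_le {j : ℕ} (hj : 2 ≤ j) :
    4 * 2 ^ (j * j) ≤ (2 ^ j) ^ (2 * (2 * j) - 1) := by
  rw [← pow_mul, show 4 = 2 ^ 2 by rfl, ← pow_add]
  refine Nat.pow_le_pow_right two_pos ?_
  calc 2 + j * j ≤ j * (j + 1) := by nlinarith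
    _ ≤ j * (2 * (2 * j) - 1) := Nat.mul_le_mul_left _ (by omega)

/-- SD-RLS^r with parameter `R = n^d` (for a constant `d > 0`)
needs expected time `n^{Ω(log n)}` on TwoRates. -/
theorem sdrls_twoRates (d : ℝ) (hd : 0 < d) :
    ∃ c : ℝ, 0 < c ∧ ∃ N : ℕ, ∀ n a g : ℕ,
      N ≤ n → a * a = n → 2 ^ g = n → g ∣ a → 4 ∣ n →
        ENNReal.ofReal ((n : ℝ) ^ (c * Real.log n)) ≤
          expectedRuntime n (TwoRates n (3 * n / 4 - a) g) ((n : ℝ) ^ d) := by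
  refine ⟨1 / 4, by norm_num, max (2 ^ 12) ⌈Real.exp (1 / d)⌉₊, ?_⟩
  intro n a g hN haa hg _ h4n
  obtain ⟨j, rfl, rfl⟩ := exists_eq_two_pow_of_mul_self_eq (haa.trans hg.symm)
  have hj : 6 ≤ j := by
    have : 2 ^ 12 ≤ 2 ^ (2 * j) := hg ▸ le_of_max_le_left hN
    have := (Nat.pow_le_pow_iff_right (le_refl 2)).1 this
    omega
  have h8j := eight_mul_le_two_pow hj
  have hn : 8 * 2 ^ j ≤ n := haa ▸ Nat.mul_le_mul_right (2 ^ j) (by omega : 8 ≤ 2 ^ j)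
  have hR : 1 ≤ Real.log ((n : ℝ) ^ d) :=
    one_le_log_rpow hd ((Nat.le_ceil _).trans (by exact_mod_cast le_of_max_le_right hN))
  have htail : ((3 * n / 4 - 2 ^ j : ℕ) : ℝ) * (3 / 4) ^ n ≤ 1 / 2 :=
    (mul_le_mul_of_nonneg_right (by exact_mod_cast (by omega : 3 * n / 4 - 2 ^ j ≤ n))
      (by positivity)).trans (nat_mul_three_quarters_pow_le (by omega))
  have hrun := plateauTime_div_four_le_expectedRuntime (g := 2 * j) (by omega) (by omega)
    (by omega) (by omega) hR htail
  have hC := pow_le_choose_mul_self (a := 2 ^ j) (k := 2 * (2 * j) - 1) (by omega)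
  rw [haa] at hC
  have hP := (four_mul_two_pow_mul_self_le (by omega)).trans
    (hC.trans (choose_le_plateauTime (by omega) hR))
  refine le_trans ?_ hrun
  calc ENNReal.ofReal ((n : ℝ) ^ (1 / 4 * Real.log n)) ≤ ENNReal.ofReal (2 ^ (j * j)) :=
        ENNReal.ofReal_le_ofReal (rpow_log_div_four_le hg.symm)
    _ ≤ _ := by
        rw [ENNReal.le_div_iff_mul_le (by simp) (by simp), mul_comm]
        exact_mod_cast hP

end SDRLS
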